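/- arXiv:2403.07387 — 2 statements merged into one kernel-verified Lean document; each statement's English description precedes it below -/
import Mathlib

section
/- For b = (b_1,...,b_n) ∈ ℤ_{>0}^n with b_1 ≥ 2, the number of distinct points of the form π(y_k) for π ∈ S_n and 0 ≤ k ≤ n equals n!·(1/0! + 1/1! + ... + 1/n!) = ∑_{k=0}^{n} n!/k!. -/
/-!
The vectors `π(y_k)` with `k` fixed form the orbit of `y_k` under precomposition with
permutations. Since `S_1 = b_1 ≥ 2` and the partial sums are strictly increasing, the coordinate
value `1` occurs in `y_k` exactly at the first `k` places and every other value occurs once, so the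
stabilizer of `y_k` is the group of permutations of those `k` places and the orbit has `n!/k!`
elements. The number of coordinates equal to `1` is constant on an orbit, so the orbits for
different `k` are disjoint and their sizes add up.
-/

open Nat

/-- Partial sum `S_i = b_1 + ⋯ + b_i`, where `b j` denotes `b_{j+1}` (0-indexed). -/
def Spart (b : ℕ → ℕ) (i : ℕ) : ℕ := ∑ j ∈ Finset.range i, b j

open Equiv MulAction

section PermutedFunctions

variable {α β : Type*}

theorem orbit_domMulAct_eq_range_comp (f : α → β) :
    orbit (Perm α)ᵈᵐᵃ f = Set.range fun σ : Perm α => f ∘ σ := by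
  ext g
  constructor
  · rintro ⟨c, rfl⟩
    exact ⟨DomMulAct.mk.symm c, rfl⟩
  · rintro ⟨σ, rfl⟩
    exact ⟨DomMulAct.mk σ, rfl⟩

theorem ncard_range_comp_perm_mul_ncard_stabilizer [Fintype α] (f : α → β) :
    (Set.range fun σ : Perm α => f ∘ σ).ncard * {σ : Perm α | f ∘ σ = f}.ncard =
      (Fintype.card α)! := by
  have hstab : {σ : Perm α | f ∘ σ = f}.ncard = Nat.card (stabilizer (Perm α)ᵈᵐᵃ f) := by
    rw [← Nat.card_coe_set_eq]
    exact Nat.card_congr (DomMulAct.mk.subtypeEquiv fun _ => DomMulAct.mem_stabilizer_iff.symm)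
  rw [← orbit_domMulAct_eq_range_comp, ← index_stabilizer, mul_comm, hstab,
    Subgroup.card_mul_index, Nat.card_congr DomMulAct.mk.symm, Nat.card_perm,
    Nat.card_eq_fintype_card]

theorem comp_perm_eq_self_iff {p : α → Prop} {f : α → β}
    (hf : ∀ a b, f a = f b ↔ a = b ∨ p a ∧ p b) (σ : Perm α) :
    f ∘ σ = f ↔ ∀ a, ¬p a → σ a = a := by
  constructor
  · intro h a ha
    simpa [ha] using (hf (σ a) a).mp (congrFun h a)
  · intro h
    funext a
    by_cases ha : p a
    · refine (hf (σ a) a).mpr (Or.inr ⟨by_contra fun hσa => ?_, ha⟩)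
      have hσa' : σ a = a := σ.injective (h (σ a) hσa)
      rw [hσa'] at hσa
      exact hσa ha
    · simp [h a ha]

theorem ncard_comp_perm_eq_self [Fintype α] {p : α → Prop} [DecidablePred p] {f : α → β}
    (hf : ∀ a b, f a = f b ↔ a = b ∨ p a ∧ p b) :
    {σ : Perm α | f ∘ σ = f}.ncard = (Fintype.card {a // p a})! := by
  classical
  rw [← Nat.card_coe_set_eq, ← Fintype.card_perm, ← Nat.card_eq_fintype_card,
    Nat.card_congr (Perm.subtypeEquivSubtypePerm p)]
  exact Nat.card_congr (Equiv.subtypeEquivRight (comp_perm_eq_self_iff hf))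

theorem ncard_range_comp_perm [Fintype α] {p : α → Prop} [DecidablePred p] {f : α → β}
    (hf : ∀ a b, f a = f b ↔ a = b ∨ p a ∧ p b) :
    (Set.range fun σ : Perm α => f ∘ σ).ncard =
      (Fintype.card α)! / (Fintype.card {a // p a})! := by
  rw [← ncard_range_comp_perm_mul_ncard_stabilizer f, ncard_comp_perm_eq_self hf,
    Nat.mul_div_cancel _ (factorial_pos _)]

theorem card_fiber_comp_perm [Fintype α] [DecidableEq β] (f : α → β) (σ : Perm α) (c : β) :
    Fintype.card {a // (f ∘ σ) a = c} = Fintype.card {a // f a = c} :=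
  Fintype.card_congr (σ.subtypeEquiv fun _ => Iff.rfl)

end PermutedFunctions

section PartialSums

variable {b : ℕ → ℕ} {n : ℕ}

theorem Spart_strictMonoOn (hb : ∀ j < n, 1 ≤ b j) : StrictMonoOn (Spart b) (Set.Iic n) :=
  strictMonoOn_Iic_of_lt_succ fun m hm => by
    rw [Order.succ_eq_add_one, Spart, Spart, Finset.sum_range_succ]
    exact Nat.lt_add_of_pos_right (hb m hm)

theorem two_le_Spart (hb1 : 2 ≤ b 0) {i : ℕ} (hi : 0 < i) : 2 ≤ Spart b i :=
  hb1.trans (Finset.single_le_sum (fun _ _ => Nat.zero_le _) (Finset.mem_range.mpr hi))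

end PartialSums

/-- The paper's `y_k`, with coordinate `j : Fin n` standing for the paper's coordinate `j + 1`. -/
def yVec (b : ℕ → ℕ) (n k : ℕ) (j : Fin n) : ℕ :=
  if (j : ℕ) < k then 1 else Spart b (j + 1)

section yVec

variable {b : ℕ → ℕ} {n : ℕ}

theorem yVec_eq_one_iff (hb1 : 2 ≤ b 0) (k : ℕ) (j : Fin n) :
    yVec b n k j = 1 ↔ (j : ℕ) < k := by
  have : 2 ≤ Spart b (j + 1) := two_le_Spart hb1 j.succ_pos
  unfold yVec
  split_ifs with h <;> omega

theorem yVec_eq_iff (hb : ∀ j < n, 1 ≤ b j) (hb1 : 2 ≤ b 0) (k : ℕ) (i j : Fin n) :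
    yVec b n k i = yVec b n k j ↔ i = j ∨ (i : ℕ) < k ∧ (j : ℕ) < k := by
  have hS : Spart b (i + 1) = Spart b (j + 1) ↔ i = j :=
    ⟨fun h => Fin.ext (succ_injective ((Spart_strictMonoOn hb).injOn i.isLt j.isLt h)),
      fun h => h ▸ rfl⟩
  have : 2 ≤ Spart b (i + 1) := two_le_Spart hb1 i.succ_pos
  have : 2 ≤ Spart b (j + 1) := two_le_Spart hb1 j.succ_pos
  unfold yVec
  split_ifs with hi hj hj <;> simp [hS, hi, hj] <;> omega

theorem card_fiber_yVec_one (hb1 : 2 ≤ b 0) {k : ℕ} (hk : k ≤ n) :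
    Fintype.card {j // yVec b n k j = 1} = k := by
  rw [Fintype.card_congr (Equiv.subtypeEquivRight (yVec_eq_one_iff hb1 k)),
    Fintype.card_fin_lt_of_le hk]

theorem ncard_range_yVec_comp_perm (hb : ∀ j < n, 1 ≤ b j) (hb1 : 2 ≤ b 0) {k : ℕ} (hk : k ≤ n) :
    (Set.range fun σ : Perm (Fin n) => yVec b n k ∘ σ).ncard = n ! / k ! := by
  rw [ncard_range_comp_perm (yVec_eq_iff hb hb1 k), Fintype.card_fin,
    Fintype.card_fin_lt_of_le hk]

theorem pairwiseDisjoint_range_yVec_comp_perm (hb1 : 2 ≤ b 0) :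
    (Set.Iic n).PairwiseDisjoint fun k => Set.range fun σ : Perm (Fin n) => yVec b n k ∘ σ := by
  intro k hk l hl hkl
  refine Set.disjoint_left.mpr ?_
  rintro _ ⟨σ, rfl⟩ ⟨τ, hτ : yVec b n l ∘ τ = yVec b n k ∘ σ⟩
  have := card_fiber_comp_perm (yVec b n l) τ 1
  rw [hτ, card_fiber_comp_perm, card_fiber_yVec_one hb1 hk, card_fiber_yVec_one hb1 hl] at this
  exact hkl this

end yVec

/-- When `b_1 ≥ 2`, the number of distinct points `π(y_k)` for `π ∈ S_n`,
`0 ≤ k ≤ n` is `n!·(1/0! + 1/1! + ⋯ + 1/n!) = ∑_{k=0}^n n!/k!`. -/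
theorem vertex_count_b1_ge_two (n : ℕ) (b : ℕ → ℕ)
    (hb : ∀ j < n, 1 ≤ b j) (hb1 : 2 ≤ b 0) :
    {v : Fin n → ℕ | ∃ (π : Equiv.Perm (Fin n)) (k : ℕ), k ≤ n ∧
        v = fun i => if ((π i : Fin n) : ℕ) < k then 1 else Spart b (((π i : Fin n) : ℕ) + 1)}.ncard
      = ∑ k ∈ Finset.range (n + 1), n ! / k ! := by
  have hset : {v : Fin n → ℕ | ∃ (π : Equiv.Perm (Fin n)) (k : ℕ), k ≤ n ∧
        v = fun i => if ((π i : Fin n) : ℕ) < k then 1 else Spart b (((π i : Fin n) : ℕ) + 1)} =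
      ⋃ k ∈ Set.Iic n, Set.range fun σ : Perm (Fin n) => yVec b n k ∘ σ := by
    ext v
    simp only [Set.mem_ofPred_eq, Set.mem_iUnion, Set.mem_range, Set.mem_Iic]
    constructor
    · rintro ⟨π, k, hk, rfl⟩; exact ⟨k, hk, π, rfl⟩
    · rintro ⟨k, hk, π, rfl⟩; exact ⟨π, k, hk, rfl⟩
  rw [hset, (Set.finite_Iic n).ncard_biUnion (fun _ _ => Set.toFinite _)
    (pairwiseDisjoint_range_yVec_comp_perm hb1), ← Finset.coe_Iic, finsum_mem_coe_finset,
    ← Nat.range_succ_eq_Iic]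
  exact Finset.sum_congr rfl fun k hk =>
    ncard_range_yVec_comp_perm hb hb1 (Nat.lt_succ_iff.mp (Finset.mem_range.mp hk))
end

section
/- For b ∈ ℤ_{>0}^n, two distinct points v = π(y_k) and w (with π ∈ S_n, b_1 ≥ 2 or k ≥ 2) that are adjacent vertices of X_n(b) have difference vector w - v equal to one of: (S_k - 1)·e_{π(j)} for some 1 ≤ j ≤ k; b_j·(e_{π(j-1)} - e_{π(j)}) for some k+2 ≤ j ≤ n; or -(S_{k+1} - 1)·e_{π(k+1)} (the last only if k ≤ n-1). In particular, every edge of X_n(b) is parallel to a root of the root system B_n (i.e., to ±e_i or e_i - e_j). -/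
/-- A `b`-parking function. -/
def IsBParkingFunction (n : ℕ) (b : ℕ → ℕ) (β : Fin n → ℕ) : Prop :=
  (∀ i, 1 ≤ β i) ∧ ∃ σ : Equiv.Perm (Fin n),
    Monotone (β ∘ σ) ∧ ∀ i : Fin n, β (σ i) ≤ Spart b ((i : ℕ) + 1)

/-- The `b`-parking-function polytope. -/
noncomputable def bpfPolytope (n : ℕ) (b : ℕ → ℕ) : Set (Fin n → ℝ) :=
  convexHull ℝ {x | ∃ β : Fin n → ℕ, IsBParkingFunction n b β ∧ x = fun i => (β i : ℝ)}

open Finset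

theorem Finset.sum_le_sum_of_card_eq {ι M : Type*} [DecidableEq ι] [AddCommMonoid M]
    [LinearOrder M] [IsOrderedAddMonoid M] {s t : Finset ι} (f : ι → M) (hst : #s = #t)
    (h : ∀ x ∈ s \ t, ∀ y ∈ t \ s, f x ≤ f y) : ∑ x ∈ s, f x ≤ ∑ x ∈ t, f x := by
  rw [← sum_inter_add_sum_sdiff s t, ← sum_inter_add_sum_sdiff t s, inter_comm]
  refine add_le_add_right ?_ _
  rcases (t \ s).eq_empty_or_nonempty with hts | hts
  · rw [card_eq_zero.1 ((card_sdiff_comm hst).trans (card_eq_zero.2 hts)), hts]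
  obtain ⟨y, hy, hmin⟩ := exists_min_image _ f hts
  calc ∑ x ∈ s \ t, f x ≤ #(s \ t) • f y := sum_le_card_nsmul _ _ _ fun x hx => h x hx y hy
    _ = #(t \ s) • f y := by rw [card_sdiff_comm hst]
    _ ≤ ∑ x ∈ t \ s, f x := card_nsmul_le_sum _ _ _ hmin

/-- Abel summation: by induction from the least element `a` of `s`, comparing with `μ := c a`
on the rest. -/
theorem Finset.sum_mul_le_mul_sum_of_tail_nonpos {ι : Type*} [LinearOrder ι] (s : Finset ι)
    {c E : ι → ℝ} (hc : StrictMonoOn c s) (hE : ∀ j ∈ s, ∑ i ∈ s with j ≤ i, E i ≤ 0)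
    {μ : ℝ} (hμ : ∀ i ∈ s, μ < c i) :
    ∑ i ∈ s, c i * E i ≤ μ * ∑ i ∈ s, E i ∧
      (μ * ∑ i ∈ s, E i ≤ ∑ i ∈ s, c i * E i → ∀ i ∈ s, E i = 0) := by
  induction s using Finset.induction_on_min generalizing μ with
  | empty => simp
  | insert a s has ih =>
    have ha : a ∉ s := fun h => lt_irrefl a (has a h)
    have hEs : ∀ j ∈ s, ∑ i ∈ s with j ≤ i, E i ≤ 0 := fun j hj => by
      simpa [filter_insert, not_le.2 (has j hj)] using hE j (mem_insert_of_mem hj)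
    have hEa : E a + ∑ i ∈ s, E i ≤ 0 := by
      have := hE a (mem_insert_self a s)
      rwa [filter_true_of_mem fun i hi => ?_, sum_insert ha] at this
      rcases mem_insert.1 hi with rfl | hi
      exacts [le_rfl, (has i hi).le]
    obtain ⟨hle, heq⟩ := ih (hc.mono (subset_insert a s)) hEs (μ := c a)
      fun i hi => hc (mem_insert_self a s) (mem_insert_of_mem hi) (has i hi)
    have hμa : μ < c a := hμ a (mem_insert_self a s)
    rw [sum_insert ha, sum_insert ha]
    have hmid : c a * E a + ∑ i ∈ s, c i * E i ≤ c a * (E a + ∑ i ∈ s, E i) := by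
      rw [mul_add]; linarith
    refine ⟨hmid.trans (mul_le_mul_of_nonpos_right hμa.le hEa), fun hge => ?_⟩
    have htot : E a + ∑ i ∈ s, E i = 0 := by
      by_contra h
      have : 0 < (c a - μ) * -(E a + ∑ i ∈ s, E i) :=
        mul_pos (by linarith) (neg_pos.2 (lt_of_le_of_ne hEa h))
      nlinarith
    have hs : ∀ i ∈ s, E i = 0 := heq (by nlinarith)
    rw [sum_eq_zero hs, add_zero] at htot
    intro i hi
    rcases mem_insert.1 hi with rfl | hi
    exacts [htot, hs i hi]

lemma Fin.strictMonoOn_of_pred_lt {α : Type*} [Preorder α] {n k : ℕ} {f : Fin n → α}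
    (hf : ∀ i : Fin n, k + 1 ≤ (i : ℕ) → f ⟨(i : ℕ) - 1, by omega⟩ < f i) :
    StrictMonoOn f {i | k ≤ (i : ℕ)} := by
  intro i hi j hj hij
  obtain ⟨j, hjn⟩ := j
  simp only [Set.mem_ofPred_eq, Fin.lt_def] at hi hj hij
  induction j with
  | zero => omega
  | succ j ih =>
    have step := hf ⟨j + 1, hjn⟩ (by simp only; omega)
    simp only [Nat.add_sub_cancel] at step
    rcases Nat.lt_succ_iff_lt_or_eq.1 hij with h | h
    · exact (ih (by omega) (by omega) h).trans step
    · exact (show i = ⟨j, by omega⟩ from Fin.ext h) ▸ step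

lemma ContinuousLinearMap.apply_eq_sum_perm_single {ι : Type*} [Fintype ι] [DecidableEq ι]
    (l : (ι → ℝ) →L[ℝ] ℝ) (π : Equiv.Perm ι) (x : ι → ℝ) :
    l x = ∑ i, x (π i) * l (Pi.single (π i) 1) := by
  conv_lhs => rw [← univ_sum_single x, map_sum]
  rw [← Equiv.sum_comp π]
  refine sum_congr rfl fun i _ => ?_
  rw [← smul_eq_mul, ← map_smul]
  congr 1
  ext j
  simp [Pi.single_apply]

lemma Pi.single_sub_single_ne_zero {ι R : Type*} [DecidableEq ι] [Ring R] [Nontrivial R]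
    {i j : ι} (h : i ≠ j) : (Pi.single i 1 - Pi.single j 1 : ι → R) ≠ 0 := fun hz => by
  simpa [Pi.single_eq_of_ne h] using congrFun hz i

lemma sub_eq_smul_of_mem_extremePoints {E : Type*} [AddCommGroup E] [Module ℝ E]
    [TopologicalSpace E] {A : Set E} {l : StrongDual ℝ E} {u v w d : E} {a : ℝ}
    (hface : segment ℝ v w = {x ∈ A | ∀ y ∈ A, l y ≤ l x}) (hu : u ∈ A.extremePoints ℝ)
    (hud : u - v = a • d) (ha : 0 < a) (hd : d ≠ 0) (hld : 0 ≤ l d) : w - v = a • d := by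
  have hv := hface.subset (left_mem_segment ℝ v w)
  have hw := hface.subset (right_mem_segment ℝ v w)
  have hlu : l v ≤ l u := by
    rw [← sub_nonneg, ← map_sub, hud, map_smul, smul_eq_mul]
    exact mul_nonneg ha.le hld
  have huseg : u ∈ segment ℝ v w := hface ▸ ⟨hu.1, fun y hy => (hv.2 y hy).trans hlu⟩
  have huv : u ≠ v := fun h => by
    rw [h, sub_self] at hud
    exact smul_ne_zero ha.ne' hd hud.symm
  have hwu : w = u :=
    ((mem_extremePoints_iff_forall_segment.1 hu).2 v hv.1 w hw.1 huseg).resolve_left huv.symm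
  rw [hwu, hud]

lemma Spart_succ (b : ℕ → ℕ) (m : ℕ) : Spart b (m + 1) = Spart b m + b m :=
  sum_range_succ b m

lemma Spart_mono (b : ℕ → ℕ) : Monotone (Spart b) := fun _ _ h =>
  sum_le_sum_of_subset (range_subset_range.2 h)

section ParkingPolytope

variable {n : ℕ} {b : ℕ → ℕ}

lemma le_Spart (hb : ∀ j < n, 1 ≤ b j) {m : ℕ} (hm : m ≤ n) : m ≤ Spart b m := by
  induction m with
  | zero => exact Nat.zero_le _
  | succ m ih => rw [Spart_succ]; linarith [ih (by omega), hb m (by omega)]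

lemma two_le_Spart_s13 {k : ℕ} (hb : ∀ j < n, 1 ≤ b j) (hcase : 2 ≤ b 0 ∨ 2 ≤ k)
    {m : ℕ} (hm : 1 ≤ m) (hkm : k ≤ m) (hmn : m ≤ n) : 2 ≤ Spart b m := by
  rcases hcase with h | h
  · have : b 0 = Spart b 1 := by simp [Spart]
    linarith [Spart_mono b hm]
  · linarith [le_Spart hb hmn]

lemma IsBParkingFunction.comp_perm {β : Fin n → ℕ} (hβ : IsBParkingFunction n b β)
    (π : Equiv.Perm (Fin n)) : IsBParkingFunction n b (β ∘ π) := by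
  obtain ⟨hpos, σ, hmono, hbound⟩ := hβ
  refine ⟨fun i => hpos _, π⁻¹ * σ, by simpa [Function.comp_def] using hmono, fun i => ?_⟩
  simpa using hbound i

lemma IsBParkingFunction.mem_bpfPolytope {β : Fin n → ℕ} (hβ : IsBParkingFunction n b β) :
    (fun i => (β i : ℝ)) ∈ bpfPolytope n b :=
  subset_convexHull ℝ _ ⟨β, hβ, rfl⟩

lemma IsBParkingFunction.sum_Ici_le {β : Fin n → ℕ} (hβ : IsBParkingFunction n b β)
    (j : Fin n) : ∑ i ∈ Ici j, β i ≤ ∑ i ∈ Ici j, Spart b ((i : ℕ) + 1) := by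
  classical
  obtain ⟨-, σ, -, hbound⟩ := hβ
  calc ∑ i ∈ Ici j, β i = ∑ i ∈ (Ici j).map σ.symm.toEmbedding, β (σ i) := by simp
    _ ≤ ∑ i ∈ (Ici j).map σ.symm.toEmbedding, Spart b ((i : ℕ) + 1) :=
      sum_le_sum fun i _ => hbound i
    _ ≤ ∑ i ∈ Ici j, Spart b ((i : ℕ) + 1) := by
      refine sum_le_sum_of_card_eq _ (card_map _) fun x hx y hy => Spart_mono b ?_
      simp only [mem_sdiff, mem_Ici, not_le] at hx hy
      have : x < y := hx.2.trans_le hy.1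
      omega

lemma one_le_of_mem_bpfPolytope {x : Fin n → ℝ} (hx : x ∈ bpfPolytope n b) (i : Fin n) :
    1 ≤ x i := by
  refine convexHull_min ?_ (convex_halfSpace_ge (LinearMap.proj i).isLinear 1) hx
  rintro _ ⟨β, hβ, rfl⟩
  show (1 : ℝ) ≤ β i
  exact_mod_cast hβ.1 i

lemma sum_Ici_le_of_mem_bpfPolytope {x : Fin n → ℝ} (hx : x ∈ bpfPolytope n b)
    (π : Equiv.Perm (Fin n)) (j : Fin n) :
    ∑ i ∈ Ici j, x (π i) ≤ ∑ i ∈ Ici j, (Spart b ((i : ℕ) + 1) : ℝ) := by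
  have := convexHull_min ?_ (convex_halfSpace_le
    (∑ i ∈ Ici j, LinearMap.proj (R := ℝ) (φ := fun _ : Fin n => ℝ) (π i)).isLinear
    (∑ i ∈ Ici j, (Spart b ((i : ℕ) + 1) : ℝ))) hx
  · simpa using this
  rintro _ ⟨β, hβ, rfl⟩
  simpa using (mod_cast (hβ.comp_perm π).sum_Ici_le j : _)

end ParkingPolytope

/-- The point `y_m`; the coordinate `i : Fin n` is the coordinate `i + 1` of the paper. -/
def yPoint (b : ℕ → ℕ) (m : ℕ) {n : ℕ} (i : Fin n) : ℕ :=
  if (i : ℕ) < m then 1 else Spart b ((i : ℕ) + 1)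

/-- The point `π(y_m)`. -/
def vertex {n : ℕ} (b : ℕ → ℕ) (π : Equiv.Perm (Fin n)) (m : ℕ) : Fin n → ℝ :=
  fun i => (yPoint b m (π⁻¹ i) : ℝ)

section Vertex

variable {n : ℕ} {b : ℕ → ℕ}

@[simp]
lemma vertex_apply_perm (π : Equiv.Perm (Fin n)) (m : ℕ) (i : Fin n) :
    vertex b π m (π i) = yPoint b m i := by
  simp [vertex]

lemma isBParkingFunction_yPoint (hb : ∀ j < n, 1 ≤ b j) (m : ℕ) :
    IsBParkingFunction n b (yPoint b m) := by
  have hS : ∀ i : Fin n, 1 ≤ Spart b ((i : ℕ) + 1) :=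
    fun i => (le_Spart hb i.isLt).trans' le_add_self
  refine ⟨fun i => ?_, 1, fun i j hij => ?_, fun i => ?_⟩
  · unfold yPoint; split_ifs <;> simp [hS]
  · have : (i : ℕ) ≤ j := hij
    simp only [Function.comp_apply, Equiv.Perm.coe_one, id_eq, yPoint]
    split_ifs
    · exact le_rfl
    · exact hS j
    · omega
    · exact Spart_mono b (by omega)
  · unfold yPoint; split_ifs <;> simp [hS]

lemma vertex_mem_bpfPolytope (hb : ∀ j < n, 1 ≤ b j) (π : Equiv.Perm (Fin n)) (m : ℕ) :
    vertex b π m ∈ bpfPolytope n b :=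
  ((isBParkingFunction_yPoint hb m).comp_perm π⁻¹).mem_bpfPolytope

lemma sum_Ici_le_sum_Ici_vertex {k : ℕ} {x : Fin n → ℝ} (hx : x ∈ bpfPolytope n b)
    (π : Equiv.Perm (Fin n)) {j : Fin n} (hj : k ≤ (j : ℕ)) :
    ∑ i ∈ Ici j, x (π i) ≤ ∑ i ∈ Ici j, vertex b π k (π i) := by
  refine (sum_Ici_le_of_mem_bpfPolytope hx π j).trans_eq (sum_congr rfl fun i hi => ?_)
  simp only [mem_Ici, Fin.le_def] at hi
  simp [yPoint, show ¬ (i : ℕ) < k by omega]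

theorem vertex_unique_maximizer {k : ℕ} (π : Equiv.Perm (Fin n)) (l : StrongDual ℝ (Fin n → ℝ))
    (hneg : ∀ j : Fin n, (j : ℕ) < k → l (Pi.single (π j) 1) < 0)
    (hpos : ∀ h : k < n, 0 < l (Pi.single (π ⟨k, h⟩) 1))
    (hstep : ∀ i : Fin n, k + 1 ≤ (i : ℕ) →
      l (Pi.single (π ⟨(i : ℕ) - 1, by omega⟩) 1) < l (Pi.single (π i) 1))
    {x : Fin n → ℝ} (hx : x ∈ bpfPolytope n b) :
    l x ≤ l (vertex b π k) ∧ (l (vertex b π k) ≤ l x → x = vertex b π k) := by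
  classical
  set c : Fin n → ℝ := fun i => l (Pi.single (π i) 1)
  set E : Fin n → ℝ := fun i => x (π i) - vertex b π k (π i)
  set t : Finset (Fin n) := {i | (i : ℕ) < k}
  set s : Finset (Fin n) := {i | k ≤ (i : ℕ)}
  have hmono : StrictMonoOn c s := by
    simpa [s] using Fin.strictMonoOn_of_pred_lt (f := c) hstep
  have hcpos : ∀ i ∈ s, 0 < c i := fun i hi => by
    simp only [s, mem_filter, mem_univ, true_and] at hi
    have hk : k < n := hi.trans_lt i.isLt
    exact (hpos hk).trans_le (hmono.monotoneOn (by simp [s]) (by simpa [s]) (Fin.le_def.2 hi))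
  have htail : ∀ j ∈ s, ∑ i ∈ s with j ≤ i, E i ≤ 0 := fun j hj => by
    simp only [s, mem_filter, mem_univ, true_and] at hj
    have hIci : ({i ∈ s | j ≤ i} : Finset (Fin n)) = Ici j := by
      ext i; simp only [s, mem_filter, mem_univ, true_and, mem_Ici, Fin.le_def]; omega
    rw [hIci, sum_sub_distrib, sub_nonpos]
    exact sum_Ici_le_sum_Ici_vertex hx π hj
  have hhead : ∀ i ∈ t, c i * E i ≤ 0 := fun i hi => by
    simp only [t, mem_filter, mem_univ, true_and] at hi
    refine mul_nonpos_of_nonpos_of_nonneg (hneg i hi).le (sub_nonneg.2 ?_)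
    simpa [yPoint, hi] using one_le_of_mem_bpfPolytope hx (π i)
  obtain ⟨hle, heq⟩ := sum_mul_le_mul_sum_of_tail_nonpos s hmono htail hcpos
  rw [zero_mul] at hle heq
  have hdiff : l x - l (vertex b π k) = ∑ i ∈ t, c i * E i + ∑ i ∈ s, c i * E i := by
    rw [l.apply_eq_sum_perm_single π x, l.apply_eq_sum_perm_single π, ← sum_sub_distrib]
    simp only [t, s, ← not_lt, sum_filter_add_sum_filter_not, c, E, ← sub_mul, mul_comm]
  have hhead_le := sum_nonpos hhead
  refine ⟨by linarith, fun hge => ?_⟩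
  have hE : ∀ i, E i = 0 := by
    intro i
    by_cases hi : (i : ℕ) < k
    · have h0 := (sum_eq_zero_iff_of_nonpos hhead).1 (by linarith) i (by simpa [t] using hi)
      exact (mul_eq_zero.1 h0).resolve_left (hneg i hi).ne
    · exact heq (by linarith) i (by simpa [s] using hi)
  funext y
  obtain ⟨i, rfl⟩ := π.surjective y
  exact sub_eq_zero.1 (hE i)

theorem vertex_mem_extremePoints (hb : ∀ j < n, 1 ≤ b j) (π : Equiv.Perm (Fin n)) (m : ℕ) :
    vertex b π m ∈ (bpfPolytope n b).extremePoints ℝ := by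
  classical
  let c : Fin n → ℝ := fun i => if (i : ℕ) < m then -1 else (i : ℝ) + 1
  let l : StrongDual ℝ (Fin n → ℝ) := ∑ i, c i • ContinuousLinearMap.proj (π i)
  have hl : ∀ j, l (Pi.single (π j) 1) = c j := fun j => by
    simp [l, Pi.single_apply, π.injective.eq_iff]
  refine exposedPoints_subset_extremePoints
    ⟨vertex_mem_bpfPolytope hb π m, l, fun x hx => vertex_unique_maximizer π l ?_ ?_ ?_ hx⟩
  · intro j hj
    simp [hl, c, hj]
  · intro h
    simp only [hl, c, lt_irrefl, if_false]
    positivity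
  · intro i hi
    simp only [hl, c, if_neg (show ¬ (i : ℕ) < m by omega),
      if_neg (show ¬ (i : ℕ) - 1 < m by omega)]
    push_cast [show 1 ≤ (i : ℕ) by omega]
    linarith

lemma vertex_swap_pred_sub {k : ℕ} (hk : k ≤ n) (π : Equiv.Perm (Fin n)) (j : Fin n)
    (hj : (j : ℕ) < k) :
    vertex b (π * Equiv.swap j ⟨k - 1, by omega⟩) (k - 1) - vertex b π k =
      ((Spart b k : ℝ) - 1) • Pi.single (π j) 1 := by
  have hk1 : k - 1 + 1 = k := by omega
  funext y
  obtain ⟨y, rfl⟩ := π.surjective y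
  simp only [Pi.sub_apply, vertex, yPoint, mul_inv_rev, Equiv.swap_inv, Equiv.Perm.coe_mul,
    Equiv.Perm.coe_inv, Function.comp_apply, Equiv.symm_apply_apply, Equiv.swap_apply_def,
    Fin.ext_iff, Nat.cast_ite, Nat.cast_one, Pi.smul_apply, Pi.single_apply,
    EmbeddingLike.apply_eq_iff_eq, smul_eq_mul, mul_ite, mul_one, mul_zero]
  split_ifs <;> first | omega | simp_all

lemma vertex_succ_sub {k : ℕ} (π : Equiv.Perm (Fin n)) (hk : k < n) :
    vertex b π (k + 1) - vertex b π k =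
      -((Spart b (k + 1) : ℝ) - 1) • Pi.single (π ⟨k, hk⟩) 1 := by
  funext y
  obtain ⟨y, rfl⟩ := π.surjective y
  simp only [Pi.sub_apply, vertex, yPoint, Equiv.Perm.coe_inv, Equiv.symm_apply_apply,
    Order.lt_add_one_iff, Nat.cast_ite, Nat.cast_one, neg_sub, Pi.smul_apply, Pi.single_apply,
    EmbeddingLike.apply_eq_iff_eq, Fin.ext_iff, smul_eq_mul, mul_ite, mul_one, mul_zero]
  split_ifs <;> first | omega | simp_all

lemma vertex_swap_sub {k : ℕ} (π : Equiv.Perm (Fin n)) (i : Fin n) (hi : k + 1 ≤ (i : ℕ)) :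
    vertex b (π * Equiv.swap ⟨(i : ℕ) - 1, by omega⟩ i) k - vertex b π k =
      (b i : ℝ) • (Pi.single (π ⟨(i : ℕ) - 1, by omega⟩) 1 - Pi.single (π i) 1) := by
  have hS : Spart b (i + 1) = Spart b ((i : ℕ) - 1 + 1) + b i := by
    rw [Nat.sub_add_cancel (show 1 ≤ (i : ℕ) by omega), Spart_succ]
  funext y
  obtain ⟨⟨y, hy⟩, rfl⟩ := π.surjective y
  simp only [Pi.sub_apply, vertex, yPoint, mul_inv_rev, Equiv.swap_inv, Equiv.Perm.coe_mul,
    Equiv.Perm.coe_inv, Function.comp_apply, Equiv.symm_apply_apply, Equiv.swap_apply_def,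
    Fin.ext_iff, Nat.cast_ite, Nat.cast_one, Pi.smul_apply, Pi.single_apply,
    EmbeddingLike.apply_eq_iff_eq, smul_eq_mul]
  split_ifs <;> (try simp only at *) <;> first | omega | (subst_vars; push_cast [hS]; ring)

end Vertex

theorem edge_directions_general (n : ℕ) (b : ℕ → ℕ) (hb : ∀ j < n, 1 ≤ b j)
    (k : ℕ) (hk : k ≤ n) (π : Equiv.Perm (Fin n))
    (hcase : 2 ≤ b 0 ∨ 2 ≤ k)
    (v w : Fin n → ℝ)
    (hv : v = fun i => if ((π⁻¹ i : Fin n) : ℕ) < k then (1 : ℝ)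
      else (Spart b (((π⁻¹ i : Fin n) : ℕ) + 1) : ℝ))
    (hne : v ≠ w)
    (hedge : IsExposed ℝ (bpfPolytope n b) (segment ℝ v w)) :
    (∃ j : Fin n, (j : ℕ) < k ∧
      w - v = ((Spart b k : ℝ) - 1) • (Pi.single (π j) (1 : ℝ) : Fin n → ℝ)) ∨
    (∃ i : Fin n, ∃ h : k + 1 ≤ (i : ℕ),
      w - v = (b (i : ℕ) : ℝ) •
        ((Pi.single (π ⟨(i : ℕ) - 1, Nat.lt_of_le_of_lt (Nat.sub_le _ _) i.isLt⟩) (1 : ℝ) : Fin n → ℝ)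
          - (Pi.single (π i) (1 : ℝ) : Fin n → ℝ))) ∨
    (∃ h : k < n,
      w - v = -((Spart b (k + 1) : ℝ) - 1) • (Pi.single (π ⟨k, h⟩) (1 : ℝ) : Fin n → ℝ)) := by
  obtain ⟨l, hface⟩ := hedge ⟨v, left_mem_segment ℝ v w⟩
  replace hv : v = vertex b π k := by
    rw [hv]; ext i; simp only [vertex, yPoint]; split_ifs <;> simp
  subst hv
  have hsingle : ∀ i : Fin n, (Pi.single i 1 : Fin n → ℝ) ≠ 0 := fun _ =>
    Pi.single_eq_zero_iff.not.2 one_ne_zero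
  by_cases hA : ∃ j : Fin n, (j : ℕ) < k ∧ 0 ≤ l (Pi.single (π j) 1)
  · obtain ⟨j, hj, hlj⟩ := hA
    have hS : (2 : ℝ) ≤ Spart b k := mod_cast two_le_Spart_s13 hb hcase (by omega) le_rfl hk
    exact Or.inl ⟨j, hj, sub_eq_smul_of_mem_extremePoints hface (vertex_mem_extremePoints hb _ _)
      (vertex_swap_pred_sub hk π j hj) (by linarith) (hsingle _) hlj⟩
  by_cases hB : ∃ h : k < n, l (Pi.single (π ⟨k, h⟩) 1) ≤ 0
  · obtain ⟨h, hlk⟩ := hB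
    have hS : (2 : ℝ) ≤ Spart b (k + 1) := mod_cast two_le_Spart_s13 hb hcase (by omega) (by omega) h
    refine Or.inr (Or.inr ⟨h, ?_⟩)
    rw [neg_smul, ← smul_neg]
    exact sub_eq_smul_of_mem_extremePoints hface (vertex_mem_extremePoints hb _ _)
      (by rw [vertex_succ_sub π h, neg_smul, smul_neg]) (by linarith) (neg_ne_zero.2 (hsingle _))
      (by simpa using hlk)
  by_cases hC : ∃ i : Fin n, k + 1 ≤ (i : ℕ) ∧
      l (Pi.single (π i) 1) ≤ l (Pi.single (π ⟨(i : ℕ) - 1, by omega⟩) 1)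
  · obtain ⟨i, hi, hli⟩ := hC
    have hbi : (1 : ℝ) ≤ b i := mod_cast hb i i.isLt
    have hd := Pi.single_sub_single_ne_zero (R := ℝ) (π.injective.ne
      (a₁ := ⟨(i : ℕ) - 1, by omega⟩) (a₂ := i) (Fin.ne_of_val_ne (by simp only; omega)))
    exact Or.inr (Or.inl ⟨i, hi, sub_eq_smul_of_mem_extremePoints hface
      (vertex_mem_extremePoints hb _ _) (vertex_swap_sub π i hi) (by linarith) hd
      (by rw [map_sub]; linarith)⟩)
  push Not at hA hB hC
  have hvmax := hface.subset (left_mem_segment ℝ (vertex b π k) w)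
  have hwmax := hface.subset (right_mem_segment ℝ (vertex b π k) w)
  exact absurd ((vertex_unique_maximizer π l hA hB hC hwmax.1).2 (hwmax.2 _ hvmax.1)).symm hne

/-- The edge directions from a vertex `v = π(y_k)` (with `b_1 ≥ 2` or `k ≥ 2`):
if `w` is a vertex adjacent to `v` (i.e. `segment v w` is an edge of `X_n(b)`),
then `w - v` equals `(S_k - 1)·e_{π(j)}` for some `1 ≤ j ≤ k`, or
`b_j·(e_{π(j-1)} - e_{π(j)})` for some `k+2 ≤ j ≤ n`, or
`-(S_{k+1} - 1)·e_{π(k+1)}` (only if `k ≤ n-1`). In particular every edge is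
parallel to a root of `B_n`. -/
theorem edge_directions (n : ℕ) (b : ℕ → ℕ) (hb : ∀ j < n, 1 ≤ b j)
    (k : ℕ) (hk : k ≤ n) (π : Equiv.Perm (Fin n))
    (hcase : 2 ≤ b 0 ∨ 2 ≤ k)
    (v w : Fin n → ℝ)
    (hv : v = fun i => if ((π⁻¹ i : Fin n) : ℕ) < k then (1 : ℝ)
      else (Spart b (((π⁻¹ i : Fin n) : ℕ) + 1) : ℝ))
    (hvvert : v ∈ Set.extremePoints ℝ (bpfPolytope n b))
    (hwvert : w ∈ Set.extremePoints ℝ (bpfPolytope n b))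
    (hne : v ≠ w)
    (hedge : IsExposed ℝ (bpfPolytope n b) (segment ℝ v w)) :
    (∃ j : Fin n, (j : ℕ) < k ∧
      w - v = ((Spart b k : ℝ) - 1) • (Pi.single (π j) (1 : ℝ) : Fin n → ℝ)) ∨
    (∃ i : Fin n, ∃ h : k + 1 ≤ (i : ℕ),
      w - v = (b (i : ℕ) : ℝ) •
        ((Pi.single (π ⟨(i : ℕ) - 1, Nat.lt_of_le_of_lt (Nat.sub_le _ _) i.isLt⟩) (1 : ℝ) : Fin n → ℝ)
          - (Pi.single (π i) (1 : ℝ) : Fin n → ℝ))) ∨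
    (∃ h : k < n,
      w - v = -((Spart b (k + 1) : ℝ) - 1) • (Pi.single (π ⟨k, h⟩) (1 : ℝ) : Fin n → ℝ)) :=
  edge_directions_general n b hb k hk π hcase v w hv hne hedge
end
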